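/- arXiv:1307.5143 — 3 statements merged into one kernel-verified Lean document; each statement's English description precedes it below -/
import Mathlib

section
/- Let u ∈ H_{[1,n]} be a vector in an n-fold tensor product of finite-dimensional spaces. For any cut position i and integer m, the operation trim^i_m (keeping the m largest Schmidt terms across the cut (i,i+1)) does not increase the Schmidt rank of u across any other cut (j,j+1). -/
/-!
Write `Π = ∑_{k < m} |b_k⟩⟨b_k|`. Since the `b_k` are orthonormal, `trim(u) = (Id ⊗ Π) u`.
The operator `Id ⊗ Π` acts on `H_2 ⊗ H_3`, i.e. entirely on the right-hand side of the cut
`(1, 2)`, so the matrix of `trim(u)` across that cut is the matrix of `u` multiplied on the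
right by `1 ⊗ Πᵀ`, and its rank cannot exceed that of `u`.
-/

/-- Elementary tensor of two vectors, in the function model of a bipartite tensor product. -/
noncomputable def tens {α β : Type*} [Fintype α] [Fintype β]
    (a : EuclideanSpace ℂ α) (b : EuclideanSpace ℂ β) :
    EuclideanSpace ℂ (α × β) := WithLp.toLp 2 (fun x : α × β => a x.1 * b x.2)

open Matrix WithLp Kronecker

variable {α β γ ι : Type*} [Fintype α] [Fintype β] [Fintype γ]

def cutMatrix (v : EuclideanSpace ℂ ((α × β) × γ)) : Matrix α (β × γ) ℂ :=
  Matrix.of fun i yz => v ((i, yz.1), yz.2)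

noncomputable def projMatrix (b : ι → EuclideanSpace ℂ γ) (s : Finset ι) : Matrix γ γ ℂ :=
  ∑ k ∈ s, vecMulVec (ofLp (b k)) (star (ofLp (b k)))

theorem toLpLin_projMatrix_of_orthonormal [DecidableEq γ] [DecidableEq ι]
    {b : ι → EuclideanSpace ℂ γ} (hb : Orthonormal ℂ b) (s : Finset ι) (j : ι) :
    toLpLin 2 2 (projMatrix b s) (b j) = if j ∈ s then b j else 0 := by
  have hinner (k : ι) : star (ofLp (b k)) ⬝ᵥ ofLp (b j) = if k = j then 1 else 0 := by
    rw [dotProduct_comm]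
    exact orthonormal_iff_ite.mp hb k j
  ext z
  simp only [projMatrix, toLpLin_apply, sum_mulVec, vecMulVec_mulVec, hinner]
  simp [Finset.sum_apply, ite_apply]
  split_ifs <;> rfl

section

variable [DecidableEq α] [DecidableEq β] [DecidableEq γ]

theorem toLpLin_one_kronecker_tens (M : Matrix γ γ ℂ) (a : EuclideanSpace ℂ (α × β))
    (b : EuclideanSpace ℂ γ) :
    toLpLin 2 2 ((1 : Matrix (α × β) (α × β) ℂ) ⊗ₖ M) (tens a b) =
      tens a (toLpLin 2 2 M b) := by
  ext x
  simp [tens, toLpLin_apply, mulVec, dotProduct, Fintype.sum_prod_type, one_apply,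
    Finset.mul_sum, mul_left_comm]

theorem toLpLin_one_kronecker_projMatrix_sum [Fintype ι] [DecidableEq ι]
    {a : ι → EuclideanSpace ℂ (α × β)} {b : ι → EuclideanSpace ℂ γ} (hb : Orthonormal ℂ b)
    (c : ι → ℂ) (s : Finset ι) :
    toLpLin 2 2 ((1 : Matrix (α × β) (α × β) ℂ) ⊗ₖ projMatrix b s)
        (∑ j, c j • tens (a j) (b j)) = ∑ j ∈ s, c j • tens (a j) (b j) := by
  have tens_zero (j : ι) : tens (a j) (0 : EuclideanSpace ℂ γ) = 0 := by
    ext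
    simp [tens]
  simp only [map_sum, map_smul, toLpLin_one_kronecker_tens,
    toLpLin_projMatrix_of_orthonormal hb, apply_ite, tens_zero, smul_zero,
    Finset.sum_ite_mem, Finset.univ_inter]

theorem cutMatrix_toLpLin_one_kronecker (M : Matrix γ γ ℂ)
    (v : EuclideanSpace ℂ ((α × β) × γ)) :
    cutMatrix (toLpLin 2 2 ((1 : Matrix (α × β) (α × β) ℂ) ⊗ₖ M) v) =
      cutMatrix v * ((1 : Matrix β β ℂ) ⊗ₖ Mᵀ) := by
  ext i ⟨y, z⟩
  simp [cutMatrix, toLpLin_apply, mulVec, dotProduct, Matrix.mul_apply, Fintype.sum_prod_type,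
    one_apply, mul_comm]

theorem rank_cutMatrix_toLpLin_one_kronecker_le (M : Matrix γ γ ℂ)
    (v : EuclideanSpace ℂ ((α × β) × γ)) :
    (cutMatrix (toLpLin 2 2 ((1 : Matrix (α × β) (α × β) ℂ) ⊗ₖ M) v)).rank ≤
      (cutMatrix v).rank := by
  rw [cutMatrix_toLpLin_one_kronecker]
  exact rank_mul_le_left _ _

end

theorem trim_not_increase_other_rank_general
    {p q r N : ℕ} (u : EuclideanSpace ℂ ((Fin p × Fin q) × Fin r))
    (a : Fin N → EuclideanSpace ℂ (Fin p × Fin q)) (b : Fin N → EuclideanSpace ℂ (Fin r))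
    (hb : Orthonormal ℂ b)
    (lam : Fin N → ℝ)
    (hdecomp : u = ∑ j, (lam j : ℂ) • tens (a j) (b j))
    (m : ℕ) :
    (Matrix.of fun (i : Fin p) (yz : Fin q × Fin r) =>
        (∑ j ∈ Finset.univ.filter (fun j : Fin N => (j : ℕ) < m),
          (lam j : ℂ) • tens (a j) (b j)) ((i, yz.1), yz.2)).rank ≤
    (Matrix.of fun (i : Fin p) (yz : Fin q × Fin r) => u ((i, yz.1), yz.2)).rank := by
  rw [← toLpLin_one_kronecker_projMatrix_sum hb, ← hdecomp]
  exact rank_cutMatrix_toLpLin_one_kronecker_le _ u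

/-- In the chain `H_1 ⊗ H_2 ⊗ H_3` (modelled by index type
`(Fin p × Fin q) × Fin r`), trimming `u` across the cut between `H_1 ⊗ H_2` and `H_3`
(keeping the `m` largest Schmidt terms `λ_k a_k ⊗ b_k`) does not increase the Schmidt
rank of `u` across the other cut, between `H_1` and `H_2 ⊗ H_3` (the rank of the
associated matrix with row index `Fin p` and column index `Fin q × Fin r`). -/
theorem trim_not_increase_other_rank
    {p q r N : ℕ} (u : EuclideanSpace ℂ ((Fin p × Fin q) × Fin r))
    (a : Fin N → EuclideanSpace ℂ (Fin p × Fin q)) (b : Fin N → EuclideanSpace ℂ (Fin r))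
    (ha : Orthonormal ℂ a) (hb : Orthonormal ℂ b)
    (lam : Fin N → ℝ) (hlam : ∀ j, 0 < lam j)
    (hmono : ∀ j k : Fin N, j ≤ k → lam k ≤ lam j)
    (hdecomp : u = ∑ j, (lam j : ℂ) • tens (a j) (b j))
    (m : ℕ) :
    (Matrix.of fun (i : Fin p) (yz : Fin q × Fin r) =>
        (∑ j ∈ Finset.univ.filter (fun j : Fin N => (j : ℕ) < m),
          (lam j : ℂ) • tens (a j) (b j)) ((i, yz.1), yz.2)).rank ≤
    (Matrix.of fun (i : Fin p) (yz : Fin q × Fin r) => u ((i, yz.1), yz.2)).rank :=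
  trim_not_increase_other_rank_general u a b hb lam hdecomp m
end

section
/- Let H be Hermitian with ground energy ε₀, gap ε, and ground state Γ, and suppose ‖H‖ ≤ n and each eigenvalue of H is at least ε₀. Let σ' be a density matrix with Tr(σ' H) ≤ ε₀ + 7√c where 14√c < ε/2. Writing σ' = Σ_j μ_j |v_j⟩⟨v_j| in its spectral decomposition with μ_1 ≥ μ_2 ≥ ..., the set J = { j : ⟨v_j, H v_j⟩ ≤ ε₀ + 14√c } satisfies Σ_{j∈J} μ_j ≥ 1/2, and moreover J contains at most one element; hence μ_1 ≥ 1/2 and the leading eigenvector v_1 satisfies ⟨v_1, H v_1⟩ ≤ ε₀ + 14√c. -/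
/-!
Write a unit vector as `u = ⟪Γ, u⟫ Γ + w` with `w ⊥ Γ`. Since `Γ` is an eigenvector of the
symmetric `H`, the energy splits as `⟪u, H u⟫ = ε₀ ‖⟪Γ, u⟫‖² + ⟪w, H w⟫ ≥ ε₀ + ε (1 - ‖⟪Γ, u⟫‖²)`,
so energy below `ε₀ + ε / 2` forces overlap `‖⟪Γ, u⟫‖² > 1 / 2`; by Bessel's inequality at most
one vector of an orthonormal family can have such overlap. The eigenvalues `μ j` of `σ'` are
probability weights, and Markov's inequality for the excess energies `⟪v j, H v j⟫ - ε₀`, whose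
mean is at most `7 √c`, shows that the eigenvectors of excess at most `14 √c` carry weight at
least `1 / 2`. There is just one of them, so its weight, hence `μ 0`, is at least `1 / 2`, and
then `μ 0 (⟪v 0, H v 0⟫ - ε₀) ≤ 7 √c` bounds the energy of `v 0`.
-/

open Finset RCLike

theorem Finset.mul_sum_filter_lt_le_sum_mul {ι : Type*} (s : Finset ι) {μ f : ι → ℝ}
    (hμ : ∀ i ∈ s, 0 ≤ μ i) (hf : ∀ i ∈ s, 0 ≤ f i) (r : ℝ) :
    r * ∑ i ∈ s with r < f i, μ i ≤ ∑ i ∈ s, μ i * f i := by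
  rw [mul_sum]
  calc ∑ i ∈ s with r < f i, r * μ i
      ≤ ∑ i ∈ s with r < f i, μ i * f i := by
        refine sum_le_sum fun i hi => ?_
        rw [mem_filter] at hi
        nlinarith [hμ i hi.1]
    _ ≤ ∑ i ∈ s, μ i * f i :=
        sum_le_sum_of_subset_of_nonneg (filter_subset _ _)
          fun i hi _ => mul_nonneg (hμ i hi) (hf i hi)

theorem Finset.one_sub_div_le_sum_filter_le {ι : Type*} (s : Finset ι) {μ f : ι → ℝ}
    (hμ : ∀ i ∈ s, 0 ≤ μ i) (hf : ∀ i ∈ s, 0 ≤ f i) (hμs : ∑ i ∈ s, μ i = 1) {t r : ℝ}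
    (ht : ∑ i ∈ s, μ i * f i ≤ t) (hr : 0 < r) :
    1 - t / r ≤ ∑ i ∈ s with f i ≤ r, μ i := by
  have hmarkov := s.mul_sum_filter_lt_le_sum_mul hμ hf r
  rw [← sum_filter_add_sum_filter_not s (fun i => f i ≤ r)] at hμs
  simp only [not_le] at hμs
  rw [sub_le_comm, le_div_iff₀' hr, ← hμs, add_sub_cancel_left]
  linarith

section InnerProductSpace

variable {𝕜 E : Type*} [RCLike 𝕜] [NormedAddCommGroup E] [InnerProductSpace 𝕜 E]

local notation "⟪" x ", " y "⟫" => inner 𝕜 x y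

theorem Orthonormal.card_filter_half_lt_norm_inner_sq_le_one {ι : Type*} {v : ι → E}
    (hv : Orthonormal 𝕜 v) {x : E} (hx : ‖x‖ ≤ 1) (s : Finset ι) :
    #{i ∈ s | 1 / 2 < ‖⟪v i, x⟫‖ ^ 2} ≤ 1 := by
  classical
  refine card_le_one.mpr fun i hi j hj => ?_
  by_contra hij
  have hbessel := hv.sum_inner_products_le x (s := {i, j})
  rw [sum_pair hij] at hbessel
  rw [mem_filter] at hi hj
  nlinarith [pow_le_one₀ (norm_nonneg x) hx (n := 2)]

theorem re_inner_map_smul_self (T : E →ₗ[𝕜] E) (r : ℝ) (x : E) :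
    re ⟪(r : 𝕜) • x, T ((r : 𝕜) • x)⟫ = r ^ 2 * re ⟪x, T x⟫ := by
  rw [map_smul, inner_smul_left, inner_smul_right, conj_ofReal, ← mul_assoc, ← ofReal_mul,
    re_ofReal_mul, sq]

theorem Submodule.mul_norm_sq_le_re_inner_map_self (T : E →ₗ[𝕜] E) (K : Submodule 𝕜 E) {l : ℝ}
    (h : ∀ w ∈ K, ‖w‖ = 1 → l ≤ re ⟪w, T w⟫) {z : E} (hz : z ∈ K) :
    l * ‖z‖ ^ 2 ≤ re ⟪z, T z⟫ := by
  rcases eq_or_ne z 0 with rfl | hz0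
  · simp
  have hunit := h _ (K.smul_mem ((‖z‖⁻¹ : ℝ) : 𝕜) hz)
    (by rw [ofReal_inv]; exact norm_smul_inv_norm hz0)
  rw [re_inner_map_smul_self] at hunit
  calc l * ‖z‖ ^ 2 ≤ ‖z‖⁻¹ ^ 2 * re ⟪z, T z⟫ * ‖z‖ ^ 2 := by gcongr
    _ = re ⟪z, T z⟫ := by field_simp

namespace LinearMap.IsSymmetric

variable {T : E →ₗ[𝕜] E} {Γ : E} {ε₀ ε : ℝ}

theorem le_re_inner_map_self_of_gap (hT : T.IsSymmetric) (hΓ : ‖Γ‖ = 1)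
    (hTΓ : T Γ = (ε₀ : 𝕜) • Γ)
    (hgap : ∀ w : E, ‖w‖ = 1 → ⟪w, Γ⟫ = 0 → ε₀ + ε ≤ re ⟪w, T w⟫) (u : E) :
    ε₀ * ‖u‖ ^ 2 + ε * (‖u‖ ^ 2 - ‖⟪Γ, u⟫‖ ^ 2) ≤ re ⟪u, T u⟫ := by
  set α := ⟪Γ, u⟫
  set w := u - α • Γ
  have hΓΓ : ⟪Γ, Γ⟫ = 1 := by simp [inner_self_eq_norm_sq_to_K, hΓ]
  have hΓw : ⟪Γ, w⟫ = 0 := by rw [inner_sub_right, inner_smul_right, hΓΓ, mul_one, sub_self]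
  have hwΓ : ⟪w, Γ⟫ = 0 := by rw [← inner_conj_symm, hΓw, map_zero]
  have hΓTw : ⟪Γ, T w⟫ = 0 := by rw [← hT, hTΓ, inner_smul_left, hΓw, mul_zero]
  have hu : u = α • Γ + w := by simp [w]
  have hpyth : ‖u‖ ^ 2 = ‖α‖ ^ 2 + ‖w‖ ^ 2 := by
    rw [hu, @norm_add_sq 𝕜, inner_smul_left, hΓw, mul_zero, map_zero, mul_zero, add_zero,
      norm_smul, hΓ, mul_one]
  have henergy : re ⟪u, T u⟫ = ε₀ * ‖α‖ ^ 2 + re ⟪w, T w⟫ := by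
    rw [hu, map_add, map_smul, hTΓ]
    simp only [inner_add_left, inner_add_right, inner_smul_left, inner_smul_right, hΓΓ, hwΓ, hΓTw,
      mul_one, mul_zero, add_zero, zero_add, map_add]
    rw [mul_left_comm, mul_conj, ← ofReal_pow, ← ofReal_mul, ofReal_re]
  have hw := (𝕜 ∙ Γ)ᗮ.mul_norm_sq_le_re_inner_map_self T
    (fun w hw hw1 => hgap w hw1 (Submodule.mem_orthogonal_singleton_iff_inner_left.mp hw))
    (Submodule.mem_orthogonal_singleton_iff_inner_right.mpr hΓw)
  linear_combination hw - henergy + (ε₀ + ε) * hpyth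

theorem half_lt_norm_inner_sq_of_re_inner_map_self_lt (hT : T.IsSymmetric) (hΓ : ‖Γ‖ = 1)
    (hTΓ : T Γ = (ε₀ : 𝕜) • Γ)
    (hgap : ∀ w : E, ‖w‖ = 1 → ⟪w, Γ⟫ = 0 → ε₀ + ε ≤ re ⟪w, T w⟫) (hε : 0 < ε) {u : E}
    (hu : ‖u‖ = 1) (hlow : re ⟪u, T u⟫ < ε₀ + ε / 2) :
    1 / 2 < ‖⟪u, Γ⟫‖ ^ 2 := by
  have hbound := hT.le_re_inner_map_self_of_gap hΓ hTΓ hgap u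
  rw [hu, norm_inner_symm, one_pow, mul_one] at hbound
  exact lt_of_mul_lt_mul_left (by linarith) hε.le

end LinearMap.IsSymmetric

end InnerProductSpace

theorem leading_eigenvector_low_energy_general
    {E : Type*} [NormedAddCommGroup E] [InnerProductSpace ℂ E]
    (H : E →ₗ[ℂ] E) (hH : H.IsSymmetric)
    (ε₀ ε : ℝ) (hε : 0 < ε)
    (Γ : E) (hΓ : ‖Γ‖ = 1) (hHΓ : H Γ = (ε₀ : ℂ) • Γ)
    (hgap : ∀ w : E, ‖w‖ = 1 → (inner ℂ w Γ : ℂ) = 0 → ε₀ + ε ≤ (inner ℂ w (H w) : ℂ).re)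
    (hground : ∀ x : E, ε₀ * ‖x‖ ^ 2 ≤ (inner ℂ x (H x) : ℂ).re)
    (c : ℝ) (hc : 0 < c) (hcε : 14 * Real.sqrt c < ε / 2)
    (N : ℕ) (μ : Fin (N + 1) → ℝ) (hμmono : Antitone μ) (hμ0 : ∀ j, 0 ≤ μ j)
    (hμsum : ∑ j, μ j = 1)
    (v : Fin (N + 1) → E) (hv : Orthonormal ℂ v)
    (henergy : ∑ j, μ j * (inner ℂ (v j) (H (v j)) : ℂ).re ≤ ε₀ + 7 * Real.sqrt c) :
    (1 / 2 ≤ ∑ j ∈ Finset.univ.filter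
        (fun j => (inner ℂ (v j) (H (v j)) : ℂ).re ≤ ε₀ + 14 * Real.sqrt c), μ j) ∧
    (Finset.univ.filter
        (fun j : Fin (N + 1) => (inner ℂ (v j) (H (v j)) : ℂ).re ≤ ε₀ + 14 * Real.sqrt c)).card ≤ 1 ∧
    1 / 2 ≤ μ 0 ∧ (inner ℂ (v 0) (H (v 0)) : ℂ).re ≤ ε₀ + 14 * Real.sqrt c := by
  set s := Real.sqrt c
  set a : Fin (N + 1) → ℝ := fun j => (inner ℂ (v j) (H (v j)) : ℂ).re
  set J := univ.filter fun j => a j ≤ ε₀ + 14 * s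
  have hexcess_nonneg (j : Fin (N + 1)) : 0 ≤ a j - ε₀ :=
    sub_nonneg.mpr (by simpa [hv.1 j] using hground (v j))
  have hexcess : ∑ j, μ j * (a j - ε₀) ≤ 7 * s := by
    simp only [mul_sub, sum_sub_distrib, ← sum_mul, hμsum, one_mul]
    linarith
  have hs : 0 < s := Real.sqrt_pos.mpr hc
  have hweight : 1 / 2 ≤ ∑ j ∈ J, μ j := by
    have hmarkov := univ.one_sub_div_le_sum_filter_le (fun j _ => hμ0 j)
      (fun j _ => hexcess_nonneg j) hμsum hexcess (by positivity : 0 < 14 * s)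
    rw [filter_congr fun j _ => sub_le_iff_le_add'] at hmarkov
    calc 1 / 2 = 1 - 7 * s / (14 * s) := by field_simp; norm_num
      _ ≤ ∑ j ∈ J, μ j := hmarkov
  have hJ_overlap : J ⊆ univ.filter fun j => 1 / 2 < ‖(inner ℂ (v j) Γ : ℂ)‖ ^ 2 := by
    intro j hj
    simp only [J, mem_filter, mem_univ, true_and] at hj ⊢
    exact hH.half_lt_norm_inner_sq_of_re_inner_map_self_lt hΓ hHΓ hgap hε (hv.1 j)
      (by simp only [re_to_complex]; linarith)
  have hcard : #J ≤ 1 :=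
    (card_le_card hJ_overlap).trans (hv.card_filter_half_lt_norm_inner_sq_le_one hΓ.le univ)
  have hμ0_half : 1 / 2 ≤ μ 0 := calc
    1 / 2 ≤ ∑ j ∈ J, μ j := hweight
    _ ≤ #J • μ 0 := sum_le_card_nsmul _ _ _ fun j _ => hμmono (Fin.zero_le j)
    _ ≤ 1 • μ 0 := nsmul_le_nsmul_left (hμ0 0) hcard
    _ = μ 0 := one_nsmul _
  have hleading : μ 0 * (a 0 - ε₀) ≤ 7 * s :=
    (single_le_sum (f := fun j => μ j * (a j - ε₀))
      (fun j _ => mul_nonneg (hμ0 j) (hexcess_nonneg j)) (mem_univ 0)).trans hexcess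
  exact ⟨hweight, hcard, hμ0_half, by nlinarith [hexcess_nonneg 0]⟩

/-- Let `H` be Hermitian with nondegenerate ground energy `ε₀` (unit ground
state `Γ`), gap `ε`, `‖H‖ ≤ n` and all eigenvalues at least `ε₀`. If a density matrix
`σ' = Σ_j μ_j |v_j⟩⟨v_j|` (spectral decomposition, `μ_1 ≥ μ_2 ≥ ...`) has energy
`Tr(σ' H) ≤ ε₀ + 7√c` with `14√c < ε/2`, then the set
`J = {j : ⟨v_j, H v_j⟩ ≤ ε₀ + 14√c}` has total weight at least `1/2` and at most one
element; hence `μ_1 ≥ 1/2` and `⟨v_1, H v_1⟩ ≤ ε₀ + 14√c`. -/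
theorem leading_eigenvector_low_energy
    {E : Type*} [NormedAddCommGroup E] [InnerProductSpace ℂ E] [FiniteDimensional ℂ E]
    (n : ℝ) (H : E →ₗ[ℂ] E) (hH : H.IsSymmetric)
    (ε₀ ε : ℝ) (hε : 0 < ε)
    (Γ : E) (hΓ : ‖Γ‖ = 1) (hHΓ : H Γ = (ε₀ : ℂ) • Γ)
    (hgap : ∀ w : E, ‖w‖ = 1 → (inner ℂ w Γ : ℂ) = 0 → ε₀ + ε ≤ (inner ℂ w (H w) : ℂ).re)
    (hground : ∀ x : E, ε₀ * ‖x‖ ^ 2 ≤ (inner ℂ x (H x) : ℂ).re)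
    (hHn : ∀ x : E, (inner ℂ x (H x) : ℂ).re ≤ n * ‖x‖ ^ 2)
    (c : ℝ) (hc : 0 < c) (hcε : 14 * Real.sqrt c < ε / 2)
    (N : ℕ) (μ : Fin (N + 1) → ℝ) (hμmono : Antitone μ) (hμ0 : ∀ j, 0 ≤ μ j)
    (hμsum : ∑ j, μ j = 1)
    (v : Fin (N + 1) → E) (hv : Orthonormal ℂ v)
    (henergy : ∑ j, μ j * (inner ℂ (v j) (H (v j)) : ℂ).re ≤ ε₀ + 7 * Real.sqrt c) :
    (1 / 2 ≤ ∑ j ∈ Finset.univ.filter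
        (fun j => (inner ℂ (v j) (H (v j)) : ℂ).re ≤ ε₀ + 14 * Real.sqrt c), μ j) ∧
    (Finset.univ.filter
        (fun j : Fin (N + 1) => (inner ℂ (v j) (H (v j)) : ℂ).re ≤ ε₀ + 14 * Real.sqrt c)).card ≤ 1 ∧
    1 / 2 ≤ μ 0 ∧ (inner ℂ (v 0) (H (v 0)) : ℂ).re ≤ ε₀ + 14 * Real.sqrt c :=
  leading_eigenvector_low_energy_general H hH ε₀ ε hε Γ hΓ hHΓ hgap hground c hc hcε N μ hμmono hμ0
    hμsum v hv henergy
end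

section
/- Let A be a positive semidefinite operator with A Γ = Γ for a unit vector Γ, ‖A‖ = 1, and ⟨w, A w⟩ ≤ η for all unit vectors w orthogonal to Γ. Then for any unit vector v with |⟨v, Γ⟩| ≥ γ > 0 and Av ≠ 0, the normalized vector Av/‖Av‖ satisfies |⟨Av/‖Av‖, Γ⟩| ≥ γ / √(γ² + η). -/
/-!
Write `v = ⟪Γ, v⟫ • Γ + w` with `w ⊥ Γ`. As `A` is self-adjoint and fixes `Γ`, it leaves the
overlap unchanged, `⟪A v, Γ⟫ = ⟪v, Γ⟫`, and maps `w` into `Γᗮ`, so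
`‖A v‖² = |⟪v, Γ⟫|² + ‖A w‖²`. Since `0 ≤ A ≤ 1` forces `A² ≤ A`, we get
`‖A w‖² ≤ re ⟪w, A w⟫ ≤ η ‖w‖² ≤ η`. Hence the normalized overlap is at least `a / √(a² + η)`
with `a = |⟪v, Γ⟫| ≥ γ`, and `t ↦ t / √(t² + η)` is increasing.
-/

open RCLike ContinuousLinearMap Submodule
open scoped InnerProductSpace

theorem div_sqrt_sq_add_le_div_sqrt_sq_add {a b c : ℝ} (ha : 0 ≤ a) (hab : a ≤ b) (hc : 0 ≤ c) :
    a / √(a ^ 2 + c) ≤ b / √(b ^ 2 + c) := by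
  rcases ha.eq_or_lt with rfl | ha
  · simp only [zero_div]
    positivity
  have hb : 0 < b := ha.trans_le hab
  rw [div_le_div_iff₀ (by positivity) (by positivity),
    ← pow_le_pow_iff_left₀ (by positivity) (by positivity) two_ne_zero, mul_pow, mul_pow,
    Real.sq_sqrt (by positivity), Real.sq_sqrt (by positivity)]
  nlinarith [mul_le_mul_of_nonneg_right (pow_le_pow_left₀ ha.le hab 2) hc]

section

variable {𝕜 E : Type*} [RCLike 𝕜] [NormedAddCommGroup E] [InnerProductSpace 𝕜 E]

theorem norm_smul_add_sq_of_inner_eq_zero {Γ y : E} (hΓ : ‖Γ‖ = 1) (hΓy : ⟪Γ, y⟫_𝕜 = 0) (c : 𝕜) :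
    ‖c • Γ + y‖ ^ 2 = ‖c‖ ^ 2 + ‖y‖ ^ 2 := by
  have h := norm_add_sq_eq_norm_sq_add_norm_sq_of_inner_eq_zero (c • Γ) y
    (by rw [inner_smul_left, hΓy, mul_zero])
  rw [norm_smul, hΓ, mul_one] at h
  simpa only [sq] using h

namespace ContinuousLinearMap

variable {T : E →L[𝕜] E}

theorem re_inner_apply_self_le_norm_sq (hT : ‖T‖ ≤ 1) (x : E) : re ⟪x, T x⟫_𝕜 ≤ ‖x‖ ^ 2 :=
  calc re ⟪x, T x⟫_𝕜 ≤ ‖x‖ * ‖T x‖ := re_inner_le_norm _ _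
    _ ≤ ‖x‖ * ‖x‖ := by gcongr; simpa using T.le_of_opNorm_le hT x
    _ = ‖x‖ ^ 2 := (sq _).symm

theorem IsPositive.inner_mul_inner_self_le (hT : T.IsPositive) (x y : E) :
    ‖⟪x, T y⟫_𝕜‖ * ‖⟪y, T x⟫_𝕜‖ ≤ re ⟪x, T x⟫_𝕜 * re ⟪y, T y⟫_𝕜 :=
  let form : PreInnerProductSpace.Core 𝕜 E :=
    { inner a b := ⟪a, T b⟫_𝕜
      conj_inner_symm a b := by rw [inner_conj_symm, hT.inner_left_eq_inner_right]
      re_inner_nonneg := hT.re_inner_nonneg_right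
      add_left _ _ _ := inner_add_left _ _ _
      smul_left _ _ _ := inner_smul_left _ _ _ }
  @InnerProductSpace.Core.inner_mul_inner_self_le 𝕜 E _ _ _ form x y

theorem IsPositive.norm_sq_apply_le (hT : T.IsPositive) (hT1 : ‖T‖ ≤ 1) (x : E) :
    ‖T x‖ ^ 2 ≤ re ⟪x, T x⟫_𝕜 := by
  have hcs := hT.inner_mul_inner_self_le x (T x)
  have hsq : ‖⟪T x, T x⟫_𝕜‖ = ‖T x‖ ^ 2 := by
    rw [inner_self_eq_norm_sq_to_K, norm_pow, norm_ofReal, abs_norm]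
  rw [← hT.inner_left_eq_inner_right, hsq] at hcs
  have hle := re_inner_apply_self_le_norm_sq hT1 (T x)
  nlinarith [hT.re_inner_nonneg_right x, sq_nonneg ‖T x‖]

theorem re_inner_apply_self_le_mul_norm_sq {K : Submodule 𝕜 E} {η : ℝ}
    (h : ∀ w ∈ K, ‖w‖ = 1 → re ⟪w, T w⟫_𝕜 ≤ η) {w : E} (hw : w ∈ K) :
    re ⟪w, T w⟫_𝕜 ≤ η * ‖w‖ ^ 2 := by
  rcases eq_or_ne w 0 with rfl | hw0
  · simp
  have hnorm : ‖w‖ ≠ 0 := norm_ne_zero_iff.2 hw0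
  have hu := h ((‖w‖⁻¹ : 𝕜) • w) (K.smul_mem _ hw) (by simp [norm_smul, hnorm])
  rw [map_smul, inner_smul_left, inner_smul_right, ← mul_assoc, RCLike.conj_mul, ← ofReal_pow,
    re_ofReal_mul, norm_inv, norm_ofReal, abs_norm, inv_pow,
    inv_mul_le_iff₀ (by positivity)] at hu
  linarith

theorem IsPositive.norm_sq_apply_le_of_apply_eq_self (hT : T.IsPositive) (hT1 : ‖T‖ ≤ 1)
    {Γ : E} (hΓ : ‖Γ‖ = 1) (hTΓ : T Γ = Γ) {η : ℝ}
    (h : ∀ w ∈ (𝕜 ∙ Γ)ᗮ, ‖w‖ = 1 → re ⟪w, T w⟫_𝕜 ≤ η) (v : E) :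
    ‖T v‖ ^ 2 ≤ ‖⟪Γ, v⟫_𝕜‖ ^ 2 + η * (‖v‖ ^ 2 - ‖⟪Γ, v⟫_𝕜‖ ^ 2) := by
  set c := ⟪Γ, v⟫_𝕜
  set w := v - c • Γ
  have hΓw : ⟪Γ, w⟫_𝕜 = 0 := by
    simp [w, c, inner_sub_right, inner_smul_right, inner_self_eq_norm_sq_to_K, hΓ]
  have hΓTw : ⟪Γ, T w⟫_𝕜 = 0 := by rw [← hT.inner_left_eq_inner_right, hTΓ, hΓw]
  have hv : c • Γ + w = v := add_sub_cancel _ _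
  have hTv : c • Γ + T w = T v := by rw [← hv, map_add, map_smul, hTΓ]
  have hw : ‖w‖ ^ 2 = ‖v‖ ^ 2 - ‖c‖ ^ 2 := by
    rw [← hv, norm_smul_add_sq_of_inner_eq_zero hΓ hΓw]
    ring
  calc ‖T v‖ ^ 2 = ‖c‖ ^ 2 + ‖T w‖ ^ 2 := by rw [← hTv, norm_smul_add_sq_of_inner_eq_zero hΓ hΓTw]
    _ ≤ ‖c‖ ^ 2 + η * ‖w‖ ^ 2 := by
      gcongr
      exact (hT.norm_sq_apply_le hT1 w).trans <|
        re_inner_apply_self_le_mul_norm_sq h (mem_orthogonal_singleton_iff_inner_right.2 hΓw)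
    _ = ‖c‖ ^ 2 + η * (‖v‖ ^ 2 - ‖c‖ ^ 2) := by rw [hw]

end ContinuousLinearMap

end

/-- Let `A` be a positive semidefinite operator with `AΓ = Γ` (`Γ` a unit
vector), `‖A‖ = 1`, and `⟨w, A w⟩ ≤ η` for all unit vectors `w ⊥ Γ`. Then for a unit
vector `v` with `|⟨v, Γ⟩| ≥ γ > 0` and `A v ≠ 0`, the normalized image satisfies
`|⟨Av/‖Av‖, Γ⟩| ≥ γ/√(γ² + η)`. -/
theorem agsp_improves_overlap
    {E : Type*} [NormedAddCommGroup E] [InnerProductSpace ℂ E] [FiniteDimensional ℂ E]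
    (A : E →L[ℂ] E) (hA : IsSelfAdjoint A)
    (hpos : ∀ w : E, 0 ≤ (inner ℂ w (A w) : ℂ).re)
    (hnorm : ‖A‖ = 1)
    (Γ : E) (hΓ : ‖Γ‖ = 1) (hAΓ : A Γ = Γ)
    (η : ℝ) (hη0 : 0 ≤ η)
    (hη : ∀ w : E, ‖w‖ = 1 → (inner ℂ w Γ : ℂ) = 0 → (inner ℂ w (A w) : ℂ).re ≤ η)
    (γ : ℝ) (hγ : 0 < γ)
    (v : E) (hv : ‖v‖ = 1) (hvΓ : γ ≤ ‖(inner ℂ v Γ : ℂ)‖) (hAv : A v ≠ 0) :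
    γ / Real.sqrt (γ ^ 2 + η) ≤ ‖(inner ℂ ((‖A v‖ : ℂ)⁻¹ • A v) Γ : ℂ)‖ := by
  have hApos : A.IsPositive := isPositive_def'.2
    ⟨hA, fun x ↦ by rw [reApplyInnerSelf_apply, inner_re_symm]; exact hpos x⟩
  have hAv_pos : 0 < ‖A v‖ := norm_pos_iff.2 hAv
  have hoverlap : ‖⟪(‖A v‖ : ℂ)⁻¹ • A v, Γ⟫_ℂ‖ = ‖⟪v, Γ⟫_ℂ‖ / ‖A v‖ := by
    rw [inner_smul_left, hApos.inner_left_eq_inner_right, hAΓ, norm_mul, norm_conj, norm_inv,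
      Complex.norm_real, norm_norm, inv_mul_eq_div]
  have hAv_le : ‖A v‖ ≤ √(‖⟪v, Γ⟫_ℂ‖ ^ 2 + η) := by
    have h := hApos.norm_sq_apply_le_of_apply_eq_self hnorm.le hΓ hAΓ
      (fun w hw hw1 ↦ hη w hw1 (mem_orthogonal_singleton_iff_inner_left.1 hw)) v
    rw [hv, norm_inner_symm] at h
    exact Real.le_sqrt_of_sq_le (by nlinarith [mul_nonneg hη0 (sq_nonneg ‖⟪v, Γ⟫_ℂ‖)])
  calc γ / √(γ ^ 2 + η) ≤ ‖⟪v, Γ⟫_ℂ‖ / √(‖⟪v, Γ⟫_ℂ‖ ^ 2 + η) :=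
        div_sqrt_sq_add_le_div_sqrt_sq_add hγ.le hvΓ hη0
    _ ≤ ‖⟪v, Γ⟫_ℂ‖ / ‖A v‖ := div_le_div_of_nonneg_left (norm_nonneg _) hAv_pos hAv_le
    _ = _ := hoverlap.symm
end
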